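/- arXiv:2202.03011 — 2 statements merged into one kernel-verified Lean document; each statement's English description precedes it below -/
import Mathlib

section
/- For even n, the ⌊n/2⌋² pyramidal tours x(k,s), 0 ≤ k, s ≤ (n−2)/2, defined by visiting cities 2,...,k+1 and n−s,...,n−1 in ascending order and all other intermediate cities in descending order (with no step-backs), are pairwise distinct and the corresponding vertices of PSB(n) are pairwise adjacent; hence the clique number of the 1-skeleton of PSB(n) is at least ⌊n/2⌋². -/
/-- A Hamiltonian tour on the cities `{1,…,n}` (represented as `Fin n`,
city `c` corresponding to the element `c-1`): a permutation acting cyclically on all cities. -/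
def IsTour {n : ℕ} (τ : Equiv.Perm (Fin n)) : Prop :=
  ∀ i j : Fin n, ∃ k : ℕ, (τ ^ k) i = j

/-- `i` is a peak of the tour `τ`. -/
def IsPeak {n : ℕ} (τ : Equiv.Perm (Fin n)) (i : Fin n) : Prop :=
  τ⁻¹ i < i ∧ τ i < i

/-- `i` is a step-back peak of `τ`: either `τ⁻¹ i < i`, `τ i = i - 1`, `τ² i > i`
(ascending step-back) or `τ⁻² i > i`, `τ⁻¹ i = i - 1`, `τ i < i` (descending step-back). -/
def IsStepBackPeak {n : ℕ} (τ : Equiv.Perm (Fin n)) (i : Fin n) : Prop :=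
  (τ⁻¹ i < i ∧ ((τ i : ℕ) + 1 = (i : ℕ)) ∧ i < τ (τ i)) ∨
  (i < τ⁻¹ (τ⁻¹ i) ∧ ((τ⁻¹ i : ℕ) + 1 = (i : ℕ)) ∧ τ i < i)

/-- A pyramidal tour: a Hamiltonian tour whose unique peak is the last city `n`. -/
def IsPyramidal {n : ℕ} (τ : Equiv.Perm (Fin n)) : Prop :=
  IsTour τ ∧ ∀ i : Fin n, IsPeak τ i ↔ (i : ℕ) = n - 1

/-- A pyramidal tour with step-backs: a Hamiltonian tour with exactly one proper peak
(a peak that is not a step-back peak), namely the last city `n`. -/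
def IsPSB {n : ℕ} (τ : Equiv.Perm (Fin n)) : Prop :=
  IsTour τ ∧ ∀ i : Fin n, (IsPeak τ i ∧ ¬ IsStepBackPeak τ i) ↔ (i : ℕ) = n - 1

/-- City `i` is visited by `τ` in ascending order (taking step-backs into account):
either the successor of `i` is larger and `i` is not the lower city of a descending
step-back, or `i` is an ascending step-back peak. -/
def Ascends {n : ℕ} (τ : Equiv.Perm (Fin n)) (i : Fin n) : Prop :=
  (i < τ i ∧ ¬ (((i : ℕ) + 1 = (τ i : ℕ)) ∧ τ (τ i) < τ i ∧ τ i < τ⁻¹ i)) ∨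
  (τ⁻¹ i < i ∧ ((τ i : ℕ) + 1 = (i : ℕ)) ∧ i < τ (τ i))

/-- The city represented by the element of `Fin n` with value `m` is visited ascending. -/
def AscAt {n : ℕ} (τ : Equiv.Perm (Fin n)) (m : ℕ) : Prop :=
  ∃ i : Fin n, (i : ℕ) = m ∧ Ascends τ i

/-- The city represented by the element of `Fin n` with value `m` is a step-back peak. -/
def SBPeakAt {n : ℕ} (τ : Equiv.Perm (Fin n)) (m : ℕ) : Prop :=
  ∃ i : Fin n, (i : ℕ) = m ∧ IsStepBackPeak τ i

/-- The pyramidal encodings of `x` and `y` have the same value at coordinate `m`. -/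
def SameEnc {n : ℕ} (x y : Equiv.Perm (Fin n)) (m : ℕ) : Prop :=
  (AscAt x m ↔ AscAt y m) ∧ (SBPeakAt x m ↔ SBPeakAt y m)

/-- The pyramidal encodings of `x` and `y` agree on the pair of neighboring
coordinates `(k, k+1)`, including the step-back marks overlapping the pair. -/
def SamePair {n : ℕ} (x y : Equiv.Perm (Fin n)) (k : ℕ) : Prop :=
  SameEnc x y k ∧ SameEnc x y (k + 1) ∧ (SBPeakAt x (k + 2) ↔ SBPeakAt y (k + 2))

/-- Characteristic vector of a tour, in `ℝ^E` with `E = Fin n × Fin n`. -/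
def chv {n : ℕ} (τ : Equiv.Perm (Fin n)) : Fin n × Fin n → ℝ :=
  fun e => if τ e.1 = e.2 then 1 else 0

/-- The vertices of the polytope `PSB(n)`: characteristic vectors of all
pyramidal tours with step-backs. -/
def PSBvertices (n : ℕ) : Set (Fin n × Fin n → ℝ) :=
  chv '' {τ : Equiv.Perm (Fin n) | IsPSB τ}

/-- `u` and `w` are adjacent vertices in the 1-skeleton of the polytope `conv S`:
the segment `[u,w]` is a one-dimensional face (an extreme subset) of the polytope. -/
def AdjacentIn {n : ℕ} (S : Set (Fin n × Fin n → ℝ)) (u w : Fin n × Fin n → ℝ) : Prop :=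
  u ≠ w ∧ IsExtreme ℝ (convexHull ℝ S) (segment ℝ u w)


/-!
A fixed-point-free permutation of `{0, …, n-1}` whose only peak is the top `n-1` is determined by
its set of ascents: an ascent is sent to the next ascent above it (or to the top), and the same
holds for the inverse permutation, whose ascents are `0` and the descents. This makes the tours
`x(k,s)` explicit.

For two of them, `x = x(k,s)` and `x' = x(k',s')`, the linear functional counting the arcs of a
tour that are arcs of `x` or `x'` is maximised over `PSB(n)` exactly by the tours built from such
arcs, so `[x, x']` is an edge once these are shown to be `x` and `x'` only. Such a tour `π` has no
step-back peak, since a step-back would need an arc that neither tour has; hence `π` is pyramidal.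
The ascending run of `π` from `0` can only leave the initial segment of ascents through the long
arc `k → n-1-s` of `x` or `k' → n-1-s'` of `x'`, and from there on it has no choice left, so `π`
has the ascents of `x` or of `x'`.
-/

open Finset

variable {n : ℕ}

theorem isExposed_segment_of_forall_le {E : Type*} [AddCommGroup E] [Module ℝ E]
    [TopologicalSpace E] (l : StrongDual ℝ E) {S : Set E} {u w : E} (hu : u ∈ S) (hw : w ∈ S)
    (hle : ∀ v ∈ S, l v ≤ l u) (hlw : l w = l u) (heq : ∀ v ∈ S, l v = l u → v = u ∨ v = w) :
    IsExposed ℝ (convexHull ℝ S) (segment ℝ u w) := by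
  intro _
  have hhull : convexHull ℝ S ⊆ {q | l q ≤ l u} :=
    convexHull_min hle (convex_halfSpace_le l.isLinear (l u))
  have hseg : segment ℝ u w ⊆ {q | l q = l u} := by
    rw [← convexHull_pair]
    exact convexHull_min (by rintro v (rfl | rfl) <;> simp [hlw])
      (convex_hyperplane l.isLinear (l u))
  refine ⟨l, Set.Subset.antisymm (fun p hp => ⟨segment_subset_convexHull hu hw hp, ?_⟩) ?_⟩
  · exact fun q hq => (hseg hp).symm ▸ hhull hq
  rintro p ⟨hp, hmax⟩
  have hlp : l p = l u := le_antisymm (hhull hp) (hmax u (subset_convexHull ℝ S hu))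
  have hS : S ⊆ {u, w} ∪ (S \ {u, w}) := by simp
  rcases (S \ {u, w}).eq_empty_or_nonempty with hS' | hS'
  · rw [hS', Set.union_empty] at hS
    rw [← convexHull_pair]
    exact convexHull_mono hS hp
  have hlt : convexHull ℝ (S \ {u, w}) ⊆ {q | l q < l u} :=
    convexHull_min (fun v ⟨hv, hvuw⟩ => lt_of_le_of_ne (hle v hv) fun h => hvuw (heq v hv h))
      (convex_halfSpace_lt l.isLinear (l u))
  have hjoin : p ∈ convexJoin ℝ (convexHull ℝ {u, w}) (convexHull ℝ (S \ {u, w})) :=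
    convexHull_union (𝕜 := ℝ) (Set.insert_nonempty u {w}) hS' ▸ convexHull_mono hS hp
  obtain ⟨q₁, hq₁, q₂, hq₂, a, b, -, -, hab, rfl⟩ := mem_convexJoin.mp hjoin
  rw [convexHull_pair] at hq₁
  have hgap : b * (l u - l q₂) = 0 := by
    have hlq₁ : l q₁ = l u := hseg hq₁
    simp only [map_add, map_smul, smul_eq_mul, hlq₁] at hlp
    linear_combination (-1 : ℝ) * hlp + l u * hab
  have hb0 : b = 0 :=
    (mul_eq_zero.mp hgap).resolve_right (sub_ne_zero.mpr (hlt hq₂).ne')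
  simpa [hb0, show a = 1 by linarith] using hq₁

theorem chv_injective : Function.Injective (chv (n := n)) := by
  intro σ τ h
  ext i
  have := congrFun h (i, σ i)
  simp only [chv, if_true] at this
  split_ifs at this with h'
  · rw [h']
  · norm_num at this

def sharedArcCount (x x' : Equiv.Perm (Fin n)) : StrongDual ℝ (Fin n × Fin n → ℝ) :=
  ∑ e : Fin n × Fin n, (if x e.1 = e.2 ∨ x' e.1 = e.2 then (1 : ℝ) else 0) •
    ContinuousLinearMap.proj e

theorem sharedArcCount_chv (x x' τ : Equiv.Perm (Fin n)) :
    sharedArcCount x x' (chv τ) = #{i | x i = τ i ∨ x' i = τ i} := by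
  simp only [sharedArcCount, _root_.sum_apply, smul_apply, ContinuousLinearMap.proj_apply, chv,
    smul_eq_mul, mul_ite, mul_one, mul_zero, Fintype.sum_prod_type, sum_ite_eq, mem_univ, if_true]
  rw [sum_boole]

theorem sharedArcCount_chv_le (x x' τ : Equiv.Perm (Fin n)) :
    sharedArcCount x x' (chv τ) ≤ n := by
  rw [sharedArcCount_chv]
  exact_mod_cast (card_filter_le _ _).trans_eq (card_fin n)

theorem sharedArcCount_chv_eq_iff (x x' τ : Equiv.Perm (Fin n)) :
    sharedArcCount x x' (chv τ) = n ↔ ∀ i, τ i = x i ∨ τ i = x' i := by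
  rw [sharedArcCount_chv, Nat.cast_inj]
  simpa [eq_comm] using card_filter_eq_iff (s := univ) (p := fun i => x i = τ i ∨ x' i = τ i)

theorem adjacentIn_chv {x x' : Equiv.Perm (Fin n)} (hx : IsPSB x) (hx' : IsPSB x') (hne : x ≠ x')
    (honly : ∀ τ, IsPSB τ → (∀ i, τ i = x i ∨ τ i = x' i) → τ = x ∨ τ = x') :
    AdjacentIn (PSBvertices n) (chv x) (chv x') := by
  have hmax (τ : Equiv.Perm (Fin n)) (hτ : ∀ i, τ i = x i ∨ τ i = x' i) :
      sharedArcCount x x' (chv τ) = n := (sharedArcCount_chv_eq_iff x x' τ).mpr hτ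
  have hmem {τ : Equiv.Perm (Fin n)} (hτ : IsPSB τ) : chv τ ∈ PSBvertices n := ⟨τ, hτ, rfl⟩
  refine ⟨chv_injective.ne hne, (isExposed_segment_of_forall_le (sharedArcCount x x')
    (hmem hx) (hmem hx') ?_ ?_ ?_).isExtreme⟩
  · rintro _ ⟨τ, -, rfl⟩
    rw [hmax x fun i => Or.inl rfl]
    exact sharedArcCount_chv_le x x' τ
  · rw [hmax x fun i => Or.inl rfl, hmax x' fun i => Or.inr rfl]
  · rintro _ ⟨τ, hτ, rfl⟩ h
    rw [hmax x fun i => Or.inl rfl, sharedArcCount_chv_eq_iff] at h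
    rcases honly τ hτ h with rfl | rfl <;> simp

variable {τ υ : Equiv.Perm (Fin n)} {a c : Fin n}

/-- `IsPyramidal` without the Hamiltonicity requirement, which makes it closed under inversion. -/
structure IsPyramidalPerm (τ : Equiv.Perm (Fin n)) : Prop where
  apply_ne : ∀ i, τ i ≠ i
  isPeak_iff : ∀ i, IsPeak τ i ↔ (i : ℕ) = n - 1

theorem IsTour.apply_ne (ht : IsTour τ) (hn : 2 ≤ n) (i : Fin n) : τ i ≠ i := by
  intro hfix
  have : Nontrivial (Fin n) := Fin.nontrivial_iff_two_le.mpr hn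
  obtain ⟨j, hj⟩ := exists_ne i
  obtain ⟨m, hm⟩ := ht i j
  exact hj (hm.symm.trans (Equiv.Perm.pow_apply_eq_self_of_apply_eq_self hfix m))

theorem IsPSB.isPyramidalPerm (h : IsPSB τ) (hsb : ∀ i, ¬ IsStepBackPeak τ i) (hn : 2 ≤ n) :
    IsPyramidalPerm τ where
  apply_ne := h.1.apply_ne hn
  isPeak_iff i := by rw [← h.2 i]; simp [hsb i]

/-- The cities that are the image of an ascent of a permutation with unique peak at the top. -/
def IsAscentTarget (τ : Equiv.Perm (Fin n)) (c : Fin n) : Prop :=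
  ((c : ℕ) ≠ 0 ∧ c < τ c) ∨ (c : ℕ) = n - 1

theorem isAscentTarget_congr (h : ∀ i, i < τ i ↔ i < υ i) :
    IsAscentTarget τ c ↔ IsAscentTarget υ c := by
  simp only [IsAscentTarget, h]

namespace IsPyramidalPerm

theorem inv (hτ : IsPyramidalPerm τ) : IsPyramidalPerm τ⁻¹ where
  apply_ne i h := hτ.apply_ne i (by rw [Equiv.Perm.inv_eq_iff_eq] at h; exact h.symm)
  isPeak_iff i := by rw [← hτ.isPeak_iff i, IsPeak, IsPeak, inv_inv, and_comm]

theorem lt_apply_of_inv_apply_lt (hτ : IsPyramidalPerm τ) {i : Fin n} (hi : (i : ℕ) ≠ n - 1)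
    (h : τ⁻¹ i < i) : i < τ i :=
  (lt_or_gt_of_ne (hτ.apply_ne i)).resolve_left fun h' => hi ((hτ.isPeak_iff i).mp ⟨h, h'⟩)

theorem lt_apply_apply (hτ : IsPyramidalPerm τ) {i : Fin n} (hi : i < τ i)
    (htop : (τ i : ℕ) ≠ n - 1) : τ i < τ (τ i) :=
  hτ.lt_apply_of_inv_apply_lt htop (by simpa using hi)

theorem not_lt_apply_of_eq_top (hτ : IsPyramidalPerm τ) {i : Fin n} (hi : (i : ℕ) = n - 1) :
    ¬ i < τ i :=
  fun h => lt_asymm h ((hτ.isPeak_iff i).mpr hi).2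

theorem lt_apply_of_eq_zero (hτ : IsPyramidalPerm τ) {i : Fin n} (hi : (i : ℕ) = 0) :
    i < τ i := by
  have : (τ i : ℕ) ≠ i := fun h => hτ.apply_ne i (Fin.ext h)
  rw [Fin.lt_def]
  omega

theorem isAscentTarget_apply (hτ : IsPyramidalPerm τ) (ha : a < τ a) :
    IsAscentTarget τ (τ a) := by
  by_cases htop : (τ a : ℕ) = n - 1
  · exact Or.inr htop
  · refine Or.inl ⟨fun h => ?_, hτ.lt_apply_apply ha htop⟩
    rw [Fin.lt_def] at ha
    omega

theorem exists_lt_apply_eq (hτ : IsPyramidalPerm τ) (hc : IsAscentTarget τ c) :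
    ∃ a, a < τ a ∧ τ a = c := by
  classical
  set A := univ.filter fun a => a < τ a
  set T := univ.filter (IsAscentTarget τ)
  set zero : Fin n := ⟨0, c.pos⟩
  have hzero : zero ∈ A := by simpa [A] using hτ.lt_apply_of_eq_zero rfl
  have himage : A.image τ ⊆ T := by
    intro b hb
    obtain ⟨a, ha, rfl⟩ := mem_image.mp hb
    simpa [T] using hτ.isAscentTarget_apply (by simpa [A] using ha)
  -- `τ` maps the ascents into the targets, and there are no more targets than ascents
  have hcard : T.card ≤ (A.image τ).card := by
    have hT : T ⊆ insert ⟨n - 1, by have := c.pos; omega⟩ (A.erase zero) := by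
      intro b hb
      rcases (mem_filter.mp hb).2 with ⟨hb0, hbA⟩ | hbtop
      · exact mem_insert_of_mem (mem_erase.mpr ⟨fun h => hb0 (by simp [h, zero]),
          by simpa [A] using hbA⟩)
      · exact mem_insert.mpr (Or.inl (Fin.ext hbtop))
    calc T.card ≤ (A.erase zero).card + 1 := (card_le_card hT).trans (card_insert_le _ _)
      _ = A.card := card_erase_add_one hzero
      _ = (A.image τ).card := (card_image_of_injective _ τ.injective).symm
  obtain ⟨a, ha, hac⟩ := mem_image.mp
    ((eq_of_subset_of_card_le himage hcard).symm ▸ (by simpa [T] using hc : c ∈ T))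
  exact ⟨a, by simpa [A] using ha, hac⟩

theorem apply_le_of_isAscentTarget (hτ : IsPyramidalPerm τ) (ha : a < τ a)
    (hc : IsAscentTarget τ c) (hac : a < c) : τ a ≤ c := by
  induction c using WellFoundedLT.induction generalizing a with
  | ind c ih =>
    obtain ⟨b, hb, rfl⟩ := hτ.exists_lt_apply_eq hc
    have htarget {d e : Fin n} (hd : d < τ d) (hed : e < d) : IsAscentTarget τ d :=
      Or.inl ⟨fun h => by rw [Fin.lt_def] at hed; omega, hd⟩
    rcases lt_trichotomy a b with hab | rfl | hba
    · exact (ih b hb ha (htarget hb hab) hab).trans hb.le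
    · exact le_rfl
    · exact absurd hac (not_lt.mpr (ih a hac hb (htarget ha hba) hba))

theorem apply_eq_of_isAscentTarget (hτ : IsPyramidalPerm τ) (ha : a < τ a)
    (hc : IsAscentTarget τ c) (hac : a < c) (hgap : ∀ b, a < b → b < c → ¬ IsAscentTarget τ b) :
    τ a = c :=
  (hτ.apply_le_of_isAscentTarget ha hc hac).eq_or_lt.resolve_right fun h =>
    hgap _ ha h (hτ.isAscentTarget_apply ha)

theorem lt_inv_apply_iff (hτ : IsPyramidalPerm τ) (i : Fin n) :
    i < τ⁻¹ i ↔ (i : ℕ) = 0 ∨ (¬ i < τ i ∧ (i : ℕ) ≠ n - 1) := by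
  constructor
  · intro h
    refine or_iff_not_imp_left.mpr fun hi0 => ⟨fun hi => ?_, fun htop => ?_⟩
    · obtain ⟨a, ha, rfl⟩ := hτ.exists_lt_apply_eq (Or.inl ⟨hi0, hi⟩)
      simp only [Equiv.Perm.coe_inv, Equiv.symm_apply_apply] at h
      exact lt_asymm ha h
    · exact lt_asymm h ((hτ.isPeak_iff i).mpr htop).1
  · rintro (hi0 | ⟨hi, htop⟩)
    · exact hτ.inv.lt_apply_of_eq_zero hi0
    · exact (lt_or_gt_of_ne (hτ.inv.apply_ne i)).resolve_left fun h =>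
        hi (hτ.lt_apply_of_inv_apply_lt htop h)

theorem apply_eq_apply_of_lt_apply_iff (hτ : IsPyramidalPerm τ) (hυ : IsPyramidalPerm υ)
    (h : ∀ i, i < τ i ↔ i < υ i) (ha : a < τ a) : τ a = υ a := by
  have ha' := (h a).mp ha
  exact le_antisymm
    (hτ.apply_le_of_isAscentTarget ha ((isAscentTarget_congr h).mpr
      (hυ.isAscentTarget_apply ha')) ha')
    (hυ.apply_le_of_isAscentTarget ha' ((isAscentTarget_congr h).mp
      (hτ.isAscentTarget_apply ha)) ha)

theorem eq_of_lt_apply_iff (hτ : IsPyramidalPerm τ) (hυ : IsPyramidalPerm υ)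
    (h : ∀ i, i < τ i ↔ i < υ i) : τ = υ := by
  have hinv (i : Fin n) : i < τ⁻¹ i ↔ i < υ⁻¹ i := by
    rw [hτ.lt_inv_apply_iff, hυ.lt_inv_apply_iff, h]
  ext i
  rcases lt_or_gt_of_ne (hτ.apply_ne i) with hi | hi
  · have := hτ.inv.apply_eq_apply_of_lt_apply_iff hυ.inv hinv (a := τ i) (by simpa using hi)
    have hυi : υ⁻¹ (τ i) = i := this.symm.trans (Equiv.Perm.inv_eq_iff_eq.mpr rfl)
    exact congrArg Fin.val (Equiv.Perm.inv_eq_iff_eq.mp hυi)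
  · rw [hτ.apply_eq_apply_of_lt_apply_iff hυ h hi]

end IsPyramidalPerm

/-- The successor of city `i` in the tour `x(k,s)`, cities being indexed from `0`: the tour
ascends through `0, …, k`, jumps to `n-1-s`, ascends to the top `n-1` and descends through the
remaining cities back to `0`. -/
def tourSucc (n k s i : ℕ) : ℕ :=
  if i < k then i + 1
  else if i = k then n - 1 - s
  else if n - 1 - s ≤ i ∧ i < n - 1 then i + 1
  else if i = n - 1 then (if k + 1 < n - 1 - s then n - 2 - s else 0)
  else if i = k + 1 then 0
  else i - 1

theorem tourSucc_cases {n k s i : ℕ} (hi : i < n) :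
    i < k ∧ tourSucc n k s i = i + 1 ∨
    i = k ∧ tourSucc n k s i = n - 1 - s ∨
    k < i ∧ n - 1 - s ≤ i ∧ i < n - 1 ∧ tourSucc n k s i = i + 1 ∨
    k < i ∧ i = n - 1 ∧ k + 1 < n - 1 - s ∧ tourSucc n k s i = n - 2 - s ∨
    k < i ∧ i = n - 1 ∧ n - 2 - s ≤ k ∧ tourSucc n k s i = 0 ∨
    i = k + 1 ∧ i < n - 1 - s ∧ tourSucc n k s i = 0 ∨
    k + 1 < i ∧ i < n - 1 - s ∧ tourSucc n k s i = i - 1 := by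
  unfold tourSucc
  split_ifs with h₁ h₂ h₃ h₄ h₅ h₆
  · exact Or.inl ⟨h₁, rfl⟩
  · exact Or.inr <| Or.inl ⟨h₂, rfl⟩
  · exact Or.inr <| Or.inr <| Or.inl ⟨by omega, h₃.1, h₃.2, rfl⟩
  · exact Or.inr <| Or.inr <| Or.inr <| Or.inl ⟨by omega, h₄, h₅, rfl⟩
  · exact Or.inr <| Or.inr <| Or.inr <| Or.inr <| Or.inl ⟨by omega, h₄, by omega, rfl⟩
  · exact Or.inr <| Or.inr <| Or.inr <| Or.inr <| Or.inr <| Or.inl ⟨h₆, by omega, rfl⟩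
  · exact Or.inr <| Or.inr <| Or.inr <| Or.inr <| Or.inr <| Or.inr ⟨by omega, by omega, rfl⟩

theorem tourSucc_eq_of_add_two_le {n k s i : ℕ} (hi : i < n) (h : i + 2 ≤ tourSucc n k s i) :
    i = k ∧ tourSucc n k s i = n - 1 - s := by
  have := tourSucc_cases (k := k) (s := s) hi
  omega

/-- `x` is the tour `x(k,s)`: its ascents are the cities `2, …, k+1` and `n-s, …, n-1`, which are
`1, …, k` and `n-1-s, …, n-2` in `Fin n`, together with the first city `0`. -/
structure IsKSTour (n k s : ℕ) (x : Equiv.Perm (Fin n)) : Prop where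
  two_le : 2 ≤ n
  le_k : k ≤ (n - 2) / 2
  le_s : s ≤ (n - 2) / 2
  pyramidal : IsPyramidalPerm x
  lt_apply_iff : ∀ i : Fin n, i < x i ↔ (i : ℕ) ≤ k ∨ (n - 1 - s ≤ i ∧ (i : ℕ) < n - 1)

namespace IsKSTour

variable {k s k' s' : ℕ} {x x' π : Equiv.Perm (Fin n)}

theorem isAscentTarget_iff (hx : IsKSTour n k s x) (c : Fin n) :
    IsAscentTarget x c ↔ (1 ≤ (c : ℕ) ∧ (c : ℕ) ≤ k) ∨ n - 1 - s ≤ c := by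
  have := c.isLt
  have := hx.le_s
  rw [IsAscentTarget, hx.lt_apply_iff]
  omega

theorem lt_inv_apply_iff (hx : IsKSTour n k s x) (b : Fin n) :
    b < x⁻¹ b ↔ (b : ℕ) = 0 ∨ (k < b ∧ (b : ℕ) < n - 1 - s) := by
  have := b.isLt
  have := hx.le_s
  rw [hx.pyramidal.lt_inv_apply_iff, hx.lt_apply_iff]
  omega

theorem isAscentTarget_inv_iff (hx : IsKSTour n k s x) (c : Fin n) :
    IsAscentTarget x⁻¹ c ↔ (k < c ∧ (c : ℕ) < n - 1 - s) ∨ (c : ℕ) = n - 1 := by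
  have := c.isLt
  have := hx.le_s
  rw [IsAscentTarget, hx.lt_inv_apply_iff]
  omega

theorem val_apply_of_lt_apply (hx : IsKSTour n k s x) {i : Fin n} (hi : i < x i) {c : ℕ}
    (hc : c < n) (hic : (i : ℕ) < c) (htarget : (1 ≤ c ∧ c ≤ k) ∨ n - 1 - s ≤ c)
    (hgap : ∀ b : ℕ, (i : ℕ) < b → b < c → ¬ ((1 ≤ b ∧ b ≤ k) ∨ n - 1 - s ≤ b)) :
    (x i : ℕ) = c :=
  congrArg Fin.val (hx.pyramidal.apply_eq_of_isAscentTarget (c := ⟨c, hc⟩) hi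
    ((hx.isAscentTarget_iff _).mpr htarget) hic
    fun b hib hbc hb => hgap b hib hbc ((hx.isAscentTarget_iff b).mp hb))

theorem val_apply_of_apply_lt (hx : IsKSTour n k s x) {i : Fin n} {c : ℕ} (hc : c < n)
    (hci : c < (i : ℕ)) (hasc : c = 0 ∨ (k < c ∧ c < n - 1 - s))
    (htarget : (k < i ∧ (i : ℕ) < n - 1 - s) ∨ (i : ℕ) = n - 1)
    (hgap : ∀ b : ℕ, c < b → b < (i : ℕ) → ¬ ((k < b ∧ b < n - 1 - s) ∨ b = n - 1)) :
    (x i : ℕ) = c := by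
  have := hx.pyramidal.inv.apply_eq_of_isAscentTarget (a := ⟨c, hc⟩)
    ((hx.lt_inv_apply_iff _).mpr hasc) ((hx.isAscentTarget_inv_iff i).mpr htarget) hci
    fun b hcb hbi hb => hgap b hcb hbi ((hx.isAscentTarget_inv_iff b).mp hb)
  rw [Equiv.Perm.inv_eq_iff_eq] at this
  rw [← this]

theorem val_apply (hx : IsKSTour n k s x) (i : Fin n) : (x i : ℕ) = tourSucc n k s i := by
  have := hx.le_k
  have := hx.le_s
  have := hx.two_le
  have hi := i.isLt
  have hasc := hx.lt_apply_iff i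
  rcases tourSucc_cases (k := k) (s := s) hi with ⟨_, hv⟩ | ⟨_, hv⟩ | ⟨_, _, _, hv⟩ |
    ⟨_, _, _, hv⟩ | ⟨_, _, _, hv⟩ | ⟨_, _, hv⟩ | ⟨_, _, hv⟩ <;> rw [hv]
  iterate 3
    exact hx.val_apply_of_lt_apply (hasc.mpr (by omega)) (by omega) (by omega) (by omega)
      (by omega)
  all_goals exact hx.val_apply_of_apply_lt (by omega) (by omega) (by omega) (by omega) (by omega)

theorem ne_of_ne (hx : IsKSTour n k s x) (hx' : IsKSTour n k' s' x') (hne : (k, s) ≠ (k', s')) :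
    x ≠ x' := by
  rintro rfl
  rw [Ne, Prod.mk.injEq] at hne
  have := hx.le_k; have := hx.le_s; have := hx'.le_k; have := hx'.le_s; have := hx.two_le
  have hk : k < n := by omega
  have hk' : k' < n := by omega
  have e := (hx.val_apply ⟨k, hk⟩).symm.trans (hx'.val_apply ⟨k, hk⟩)
  have e' := (hx.val_apply ⟨k', hk'⟩).symm.trans (hx'.val_apply ⟨k', hk'⟩)
  have := tourSucc_cases (k := k) (s := s) hk
  have := tourSucc_cases (k := k') (s := s') hk
  have := tourSucc_cases (k := k) (s := s) hk'
  have := tourSucc_cases (k := k') (s := s') hk'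
  simp only at e e'
  omega

theorem val_apply_eq_or (hx : IsKSTour n k s x) (hx' : IsKSTour n k' s' x')
    (hπ : ∀ i, π i = x i ∨ π i = x' i) (i : Fin n) :
    (π i : ℕ) = tourSucc n k s i ∨ (π i : ℕ) = tourSucc n k' s' i :=
  (hπ i).imp (fun h => by rw [h]; exact hx.val_apply i) (fun h => by rw [h]; exact hx'.val_apply i)

/-- An ascending step-back peak at `π a` whose long arc `π (π a) → π (π (π a))` comes from `x`. -/
theorem not_ascending_stepBack (hx : IsKSTour n k s x) (hx' : IsKSTour n k' s' x')
    (hπ : ∀ i, π i = x i ∨ π i = x' i) {a : Fin n} (hai : a < π a)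
    (hji : (π (π a) : ℕ) + 1 = π a) (hil : π a < π (π (π a)))
    (hjump : π (π (π a)) = x (π (π a))) : False := by
  have := hx.le_k; have := hx.le_s; have := hx'.le_k; have := hx'.le_s
  have haj : (a : ℕ) ≠ π (π a) :=
    Fin.val_injective.ne fun h => lt_irrefl (π a) (by rwa [← h] at hil)
  rw [Fin.lt_def] at hai hil
  have hπj : (π (π (π a)) : ℕ) = tourSucc n k s (π (π a)) := by rw [hjump]; exact hx.val_apply _
  obtain ⟨hjk, hl⟩ := tourSucc_eq_of_add_two_le (k := k) (s := s) (π (π a)).isLt (by omega)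
  have hci := tourSucc_cases (k := k) (s := s) (π a).isLt
  have hci' := tourSucc_cases (k := k') (s := s') (π a).isLt
  have hπi := (val_apply_eq_or hx hx' hπ (π a)).resolve_left (by omega)
  have hk'k : k' < k := by omega
  have hca := tourSucc_cases (k := k) (s := s) a.isLt
  have hca' := tourSucc_cases (k := k') (s := s') a.isLt
  rcases val_apply_eq_or hx hx' hπ a with h | h <;> omega

/-- A descending step-back peak at `π (π j)` whose long arc `j → π j` comes from `x`. -/
theorem not_descending_stepBack (hx : IsKSTour n k s x) (hx' : IsKSTour n k' s' x')
    (hπ : ∀ i, π i = x i ∨ π i = x' i) {j : Fin n} (hij : π (π j) < j)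
    (hbi : (π j : ℕ) + 1 = π (π j)) (hlt : π (π (π j)) < π (π j)) (hjump : π j = x j) :
    False := by
  have := hx.le_k; have := hx.le_s; have := hx'.le_k; have := hx'.le_s
  have hinj : (π (π (π j)) : ℕ) ≠ π j :=
    Fin.val_injective.ne (π.injective.ne (ne_of_lt hij))
  rw [Fin.lt_def] at hij hlt
  have hπj : (π j : ℕ) = tourSucc n k s j := by rw [hjump]; exact hx.val_apply _
  have hcj := tourSucc_cases (k := k) (s := s) j.isLt
  obtain hb0 | ⟨hjtop, hb, hks⟩ : (π j : ℕ) = 0 ∨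
      ((j : ℕ) = n - 1 ∧ (π j : ℕ) = n - 2 - s ∧ k + 1 < n - 1 - s) := by omega
  · omega
  have hss' : s ≤ s' := by
    rcases val_apply_eq_or hx hx' hπ (π j) with h | h
    · have := tourSucc_cases (k := k) (s := s) (π j).isLt
      omega
    · have := tourSucc_cases (k := k') (s := s') (π j).isLt
      omega
  rcases val_apply_eq_or hx hx' hπ (π (π j)) with h | h
  · have := tourSucc_cases (k := k) (s := s) (π (π j)).isLt
    omega
  · have := tourSucc_cases (k := k') (s := s') (π (π j)).isLt
    omega

theorem not_isStepBackPeak (hx : IsKSTour n k s x) (hx' : IsKSTour n k' s' x')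
    (hπ : ∀ i, π i = x i ∨ π i = x' i) (i : Fin n) : ¬ IsStepBackPeak π i := by
  have hπ' (i : Fin n) : π i = x' i ∨ π i = x i := (hπ i).symm
  rintro (⟨h₁, h₂, h₃⟩ | ⟨h₁, h₂, h₃⟩)
  · obtain ⟨a, rfl⟩ : ∃ a, π a = i := ⟨π⁻¹ i, by simp⟩
    simp only [Equiv.Perm.coe_inv, Equiv.symm_apply_apply] at h₁
    rcases hπ (π (π a)) with h | h
    · exact not_ascending_stepBack hx hx' hπ h₁ h₂ h₃ h
    · exact not_ascending_stepBack hx' hx hπ' h₁ h₂ h₃ h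
  · obtain ⟨j, rfl⟩ : ∃ j, π (π j) = i := ⟨π⁻¹ (π⁻¹ i), by simp⟩
    simp only [Equiv.Perm.coe_inv, Equiv.symm_apply_apply] at h₁ h₂
    rcases hπ j with h | h
    · exact not_descending_stepBack hx hx' hπ h₁ h₂ h₃ h
    · exact not_descending_stepBack hx' hx hπ' h₁ h₂ h₃ h

theorem eq_or_eq_of_forall_lt_apply (hx : IsKSTour n k s x) (hx' : IsKSTour n k' s' x')
    (hπ : ∀ i, π i = x i ∨ π i = x' i) (hpπ : IsPyramidalPerm π)
    (hall : ∀ i : Fin n, (i : ℕ) < n - 1 → i < π i) : π = x ∨ π = x' := by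
  have := hx.le_k; have := hx.le_s; have := hx'.le_k; have := hx'.le_s; have := hx.two_le
  have hasc (i : Fin n) : i < π i ↔ (i : ℕ) < n - 1 :=
    ⟨fun h => by by_contra; exact hpπ.not_lt_apply_of_eq_top (by omega) h, hall i⟩
  have hsucc (i : Fin n) (hi : (i : ℕ) < n - 1) : (π i : ℕ) = i + 1 :=
    congrArg Fin.val (hpπ.apply_eq_of_isAscentTarget (c := ⟨i + 1, by omega⟩) (hall i hi)
      (by simp only [IsAscentTarget, hasc]; omega) (Fin.lt_def.mpr (by simp))
      fun b hib hbc => by rw [Fin.lt_def] at hib hbc; simp only at hbc; omega)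
  have hk := hsucc ⟨k, by omega⟩ (by simp only; omega)
  have hk' := hsucc ⟨k', by omega⟩ (by simp only; omega)
  have e := val_apply_eq_or hx hx' hπ ⟨k, by omega⟩
  have e' := val_apply_eq_or hx hx' hπ ⟨k', by omega⟩
  have := tourSucc_cases (k := k) (s := s) (show k < n by omega)
  have := tourSucc_cases (k := k') (s := s') (show k < n by omega)
  have := tourSucc_cases (k := k) (s := s) (show k' < n by omega)
  have := tourSucc_cases (k := k') (s := s') (show k' < n by omega)
  simp only at hk hk' e e'
  obtain h | h : k + 1 = n - 1 - s ∨ k' + 1 = n - 1 - s' := by omega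
  · exact Or.inl (hpπ.eq_of_lt_apply_iff hx.pyramidal fun i => by
      rw [hasc, hx.lt_apply_iff]; omega)
  · exact Or.inr (hpπ.eq_of_lt_apply_iff hx'.pyramidal fun i => by
      rw [hasc, hx'.lt_apply_iff]; omega)

theorem eq_of_prefix_jump (hx : IsKSTour n k s x) (hx' : IsKSTour n k' s' x')
    (hπ : ∀ i, π i = x i ∨ π i = x' i) (hpπ : IsPyramidalPerm π) {m : Fin n}
    (hasc : ∀ i ≤ m, i < π i) (hjump : (m : ℕ) + 2 ≤ π m) (hxm : π m = x m) : π = x := by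
  have := hx.le_k; have := hx.le_s; have := hx'.le_k; have := hx'.le_s
  have hπm : (π m : ℕ) = tourSucc n k s m := by rw [hxm]; exact hx.val_apply m
  obtain ⟨hmk, hmv⟩ := tourSucc_eq_of_add_two_le (k := k) (s := s) m.isLt (by omega)
  rw [← hπm] at hmv
  have hsuffix (t : ℕ) : ∀ i : Fin n, (i : ℕ) = n - 1 - s + t → (i : ℕ) < n - 1 → i < π i := by
    induction t with
    | zero =>
      intro i hi htop
      obtain rfl : π m = i := Fin.ext (by omega)
      exact hpπ.lt_apply_apply (hasc m le_rfl) (by omega)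
    | succ t ih =>
      intro i hi htop
      obtain ⟨c, hc⟩ : ∃ c : Fin n, (c : ℕ) + 1 = i := ⟨⟨i - 1, by omega⟩, by simp only; omega⟩
      have hcπ := ih c (by omega) (by omega)
      have hπc : π c = i := by
        have := tourSucc_cases (k := k) (s := s) c.isLt
        have := tourSucc_cases (k := k') (s := s') c.isLt
        rw [Fin.lt_def] at hcπ
        refine Fin.ext ?_
        rcases val_apply_eq_or hx hx' hπ c with h | h <;> omega
      have := hpπ.lt_apply_apply hcπ (by omega)
      rwa [hπc] at this
  refine hpπ.eq_of_lt_apply_iff hx.pyramidal fun i => ?_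
  rw [hx.lt_apply_iff]
  constructor
  · intro hi
    by_contra hnot
    have hi' := hpπ.apply_le_of_isAscentTarget (hasc m le_rfl) (c := i)
      (Or.inl ⟨by omega, hi⟩) (Fin.lt_def.mpr (by omega))
    rcases Nat.lt_or_ge (i : ℕ) (n - 1) with h | h
    · rw [Fin.le_def] at hi'; omega
    · exact hpπ.not_lt_apply_of_eq_top (by omega) hi
  · rintro (hi | ⟨hi, htop⟩)
    · exact hasc i (Fin.le_def.mpr (by omega))
    · exact hsuffix (i - (n - 1 - s)) i (by omega) htop

theorem eq_or_eq_of_isPyramidalPerm (hx : IsKSTour n k s x) (hx' : IsKSTour n k' s' x')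
    (hπ : ∀ i, π i = x i ∨ π i = x' i) (hpπ : IsPyramidalPerm π) : π = x ∨ π = x' := by
  have := hx.two_le
  obtain ⟨M, hM, hmin⟩ := WellFounded.has_min wellFounded_lt {i : Fin n | ¬ i < π i}
    ⟨⟨n - 1, by omega⟩, hpπ.not_lt_apply_of_eq_top rfl⟩
  have hM0 : (M : ℕ) ≠ 0 := fun h => hM (hpπ.lt_apply_of_eq_zero h)
  set m : Fin n := ⟨M - 1, by omega⟩ with hm
  have hasc : ∀ i ≤ m, i < π i := fun i hi => by
    by_contra h
    exact hmin i h (Fin.lt_def.mpr (by rw [Fin.le_def, hm] at hi; simp only at hi; omega))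
  by_cases hstep : (π m : ℕ) = m + 1
  · have hpeak : IsPeak π M := by
      have hπm : π m = M := Fin.ext (by rw [hstep, hm]; simp only; omega)
      refine ⟨by rw [← hπm]; simpa using hasc m le_rfl, ?_⟩
      exact (lt_or_gt_of_ne (hpπ.apply_ne M)).resolve_right hM
    have hMtop := (hpπ.isPeak_iff M).mp hpeak
    refine eq_or_eq_of_forall_lt_apply hx hx' hπ hpπ fun i hi => ?_
    by_contra h
    exact hmin i h (Fin.lt_def.mpr (by omega))
  · have hjump : (m : ℕ) + 2 ≤ π m := by
      have := Fin.lt_def.mp (hasc m le_rfl)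
      omega
    rcases hπ m with h | h
    · exact Or.inl (eq_of_prefix_jump hx hx' hπ hpπ hasc hjump h)
    · exact Or.inr (eq_of_prefix_jump hx' hx (fun i => (hπ i).symm) hpπ hasc hjump h)

theorem adjacentIn (hx : IsKSTour n k s x) (hx' : IsKSTour n k' s' x') (hpx : IsPSB x)
    (hpx' : IsPSB x') (hne : x ≠ x') : AdjacentIn (PSBvertices n) (chv x) (chv x') :=
  adjacentIn_chv hpx hpx' hne fun _ hτ hπ => hx.eq_or_eq_of_isPyramidalPerm hx' hπ
    (hτ.isPyramidalPerm (hx.not_isStepBackPeak hx' hπ) hx.two_le)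

end IsKSTour

theorem isKSTour_of_isPSB {k s : ℕ} {x : Equiv.Perm (Fin n)} (hn : 2 ≤ n) (hk : k ≤ (n - 2) / 2)
    (hs : s ≤ (n - 2) / 2) (hpsb : IsPSB x) (hnosb : ∀ i, ¬ IsStepBackPeak x i)
    (hasc : ∀ i : Fin n, 1 ≤ (i : ℕ) → (i : ℕ) ≤ n - 2 →
      (i < x i ↔ ((i : ℕ) ≤ k ∨ n - 1 - s ≤ (i : ℕ)))) :
    IsKSTour n k s x where
  two_le := hn
  le_k := hk
  le_s := hs
  pyramidal := hpsb.isPyramidalPerm hnosb hn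
  lt_apply_iff i := by
    have := i.isLt
    by_cases h0 : (i : ℕ) = 0
    · simp only [(hpsb.isPyramidalPerm hnosb hn).lt_apply_of_eq_zero h0, true_iff]
      omega
    by_cases htop : (i : ℕ) = n - 1
    · simp only [(hpsb.isPyramidalPerm hnosb hn).not_lt_apply_of_eq_top htop, false_iff]
      omega
    rw [hasc i (by omega) (by omega)]
    omega

theorem exists_adjacentIn_clique {m : ℕ} (x : ℕ → ℕ → Equiv.Perm (Fin n))
    (hpsb : ∀ k s, k < m → s < m → IsPSB (x k s))
    (hpair : ∀ k s k' s', k < m → s < m → k' < m → s' < m → (k, s) ≠ (k', s') →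
      x k s ≠ x k' s' ∧ AdjacentIn (PSBvertices n) (chv (x k s)) (chv (x k' s'))) :
    ∃ V : Finset (Fin n × Fin n → ℝ), ↑V ⊆ PSBvertices n ∧
      (∀ u ∈ V, ∀ w ∈ V, u ≠ w → AdjacentIn (PSBvertices n) u w) ∧ m ^ 2 ≤ V.card := by
  refine ⟨(range m ×ˢ range m).image fun p => chv (x p.1 p.2), ?_, ?_, ?_⟩
  · simp only [coe_image, Set.image_subset_iff]
    rintro ⟨k, s⟩ hks
    simp only [coe_product, Set.mem_prod, coe_range, Set.mem_Iio] at hks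
    exact ⟨x k s, hpsb k s hks.1 hks.2, rfl⟩
  · simp only [mem_image, mem_product, mem_range]
    rintro _ ⟨⟨k, s⟩, ⟨hk, hs⟩, rfl⟩ _ ⟨⟨k', s'⟩, ⟨hk', hs'⟩, rfl⟩ hne
    exact (hpair k s k' s' hk hs hk' hs' fun h => hne (by rw [h])).2
  · rw [card_image_of_injOn, card_product, card_range, sq]
    rintro ⟨k, s⟩ hks ⟨k', s'⟩ hks' h
    simp only [coe_product, Set.mem_prod, coe_range, Set.mem_Iio] at hks hks'
    by_contra hne
    exact (hpair k s k' s' hks.1 hks.2 hks'.1 hks'.2 hne).1 (chv_injective h)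

theorem stmt4_general (n : ℕ)
    (x : ℕ → ℕ → Equiv.Perm (Fin n))
    (hpsb : ∀ k s, k ≤ (n - 2) / 2 → s ≤ (n - 2) / 2 → IsPSB (x k s))
    (hnosb : ∀ k s, k ≤ (n - 2) / 2 → s ≤ (n - 2) / 2 →
      ∀ i : Fin n, ¬ IsStepBackPeak (x k s) i)
    (hasc : ∀ k s, k ≤ (n - 2) / 2 → s ≤ (n - 2) / 2 →
      ∀ i : Fin n, 1 ≤ (i : ℕ) → (i : ℕ) ≤ n - 2 →
        (i < x k s i ↔ ((i : ℕ) ≤ k ∨ n - 1 - s ≤ (i : ℕ)))) :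
    (∀ k s k' s', k ≤ (n - 2) / 2 → s ≤ (n - 2) / 2 → k' ≤ (n - 2) / 2 → s' ≤ (n - 2) / 2 →
      (k, s) ≠ (k', s') →
      x k s ≠ x k' s' ∧ AdjacentIn (PSBvertices n) (chv (x k s)) (chv (x k' s'))) ∧
    ∃ V : Finset (Fin n × Fin n → ℝ), ↑V ⊆ PSBvertices n ∧
      (∀ u ∈ V, ∀ w ∈ V, u ≠ w → AdjacentIn (PSBvertices n) u w) ∧
      (n / 2) ^ 2 ≤ V.card := by
  have hpair : ∀ k s k' s', k ≤ (n - 2) / 2 → s ≤ (n - 2) / 2 → k' ≤ (n - 2) / 2 →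
      s' ≤ (n - 2) / 2 → (k, s) ≠ (k', s') →
      x k s ≠ x k' s' ∧ AdjacentIn (PSBvertices n) (chv (x k s)) (chv (x k' s')) := by
    intro k s k' s' hk hs hk' hs' hne
    have hn : 2 ≤ n := by rw [Ne, Prod.mk.injEq] at hne; omega
    have hx := isKSTour_of_isPSB hn hk hs (hpsb k s hk hs) (hnosb k s hk hs) (hasc k s hk hs)
    have hx' := isKSTour_of_isPSB hn hk' hs' (hpsb k' s' hk' hs') (hnosb k' s' hk' hs')
      (hasc k' s' hk' hs')
    have hxx' := hx.ne_of_ne hx' hne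
    exact ⟨hxx', hx.adjacentIn hx' (hpsb k s hk hs) (hpsb k' s' hk' hs') hxx'⟩
  refine ⟨hpair, exists_adjacentIn_clique x (fun k s hk hs => hpsb k s (by omega) (by omega))
    fun k s k' s' hk hs hk' hs' => hpair k s k' s' (by omega) (by omega) (by omega) (by omega)⟩

/-- For even `n`, the `⌊n/2⌋²` pyramidal tours `x k s` (no step-backs, ascending
exactly on cities `2,…,k+1` and `n-s,…,n-1`) are pairwise distinct with pairwise
adjacent vertices of `PSB(n)`; hence the clique number of the 1-skeleton of
`PSB(n)` is at least `⌊n/2⌋²`. -/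
theorem stmt4 (n : ℕ) (hn : Even n) (h4 : 4 ≤ n)
    (x : ℕ → ℕ → Equiv.Perm (Fin n))
    (hpsb : ∀ k s, k ≤ (n - 2) / 2 → s ≤ (n - 2) / 2 → IsPSB (x k s))
    (hnosb : ∀ k s, k ≤ (n - 2) / 2 → s ≤ (n - 2) / 2 →
      ∀ i : Fin n, ¬ IsStepBackPeak (x k s) i)
    (hasc : ∀ k s, k ≤ (n - 2) / 2 → s ≤ (n - 2) / 2 →
      ∀ i : Fin n, 1 ≤ (i : ℕ) → (i : ℕ) ≤ n - 2 →
        (i < x k s i ↔ ((i : ℕ) ≤ k ∨ n - 1 - s ≤ (i : ℕ)))) :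
    (∀ k s k' s', k ≤ (n - 2) / 2 → s ≤ (n - 2) / 2 → k' ≤ (n - 2) / 2 → s' ≤ (n - 2) / 2 →
      (k, s) ≠ (k', s') →
      x k s ≠ x k' s' ∧ AdjacentIn (PSBvertices n) (chv (x k s)) (chv (x k' s'))) ∧
    ∃ V : Finset (Fin n × Fin n → ℝ), ↑V ⊆ PSBvertices n ∧
      (∀ u ∈ V, ∀ w ∈ V, u ≠ w → AdjacentIn (PSBvertices n) u w) ∧
      (n / 2) ^ 2 ≤ V.card :=
  stmt4_general n x hpsb hnosb hasc
end

section
/- In any pyramidal tour with step-backs on {1,...,n} (n ≥ 3), two consecutive cities i−1 and i cannot both be step-back peaks; equivalently, step-back marks in the pyramidal encoding occupy disjoint pairs of coordinates. -/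
/-- In a pyramidal tour with step-backs, two consecutive cities cannot both be
step-back peaks: step-back marks occupy disjoint pairs of coordinates. -/
theorem stmt13 (n : ℕ) (hn : 3 ≤ n) (τ : Equiv.Perm (Fin n)) (hτ : IsPSB τ) :
    ∀ m : ℕ, ¬ (SBPeakAt τ m ∧ SBPeakAt τ (m + 1)) := by
  rintro m ⟨⟨i, hi, hiSB⟩, ⟨j, hj, hjSB⟩⟩
  have hij : (j : ℕ) = (i : ℕ) + 1 := by omega
  rcases hiSB with ⟨h1, h2, h3⟩ | ⟨h1, h2, h3⟩ <;>
    rcases hjSB with ⟨g1, g2, g3⟩ | ⟨g1, g2, g3⟩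
  · -- i asc, j asc : τ j = i, j < τ i, but τ i < i
    have hτj : τ j = i := Fin.ext (by omega)
    rw [hτj] at g3
    rw [Fin.lt_def] at g3
    omega
  · -- i asc, j desc : τ⁻¹ j = i so τ i = j, but (τ i)+1 = i
    have hτj : τ⁻¹ j = i := Fin.ext (by omega)
    have : τ i = j := by rw [← hτj]; simp
    rw [this] at h2; omega
  · -- i desc, j asc : τ j = i so τ⁻¹ i = j, but (τ⁻¹ i)+1 = i
    have hτj : τ j = i := Fin.ext (by omega)
    have : τ⁻¹ i = j := by rw [← hτj]; simp
    rw [this] at h2; omega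
  · -- i desc, j desc : τ⁻¹ j = i, j < τ⁻¹ i, but (τ⁻¹ i)+1 = i
    have hτj : τ⁻¹ j = i := Fin.ext (by omega)
    rw [hτj] at g1
    rw [Fin.lt_def] at g1
    omega
end
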